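/- For every k > 0, let G_k = ({X_0, …, X_k}, {a}, Δ_k) be the grammar with productions Δ_k = { X_i → X_{i−1} X_{i−1} | 1 ≤ i ≤ k } ∪ { X_0 → a }. Then every bounded expression Γ = γ_1* … γ_n* over Δ_k satisfying L_{X_k}(G_k) = L̂_{X_k}(Γ ∩ Γ^{df(k+1)}_{X_k}(G_k), G_k) has size |Γ| = Σ_{i=1}^n |γ_i| ≥ 2^{k−1}. -/

import Mathlib

namespace Paper

/-- A word over nonterminals `N` and terminals `T`. -/
abbrev Word (N T : Type) := List (N ⊕ T)

/-- A production of a grammar. -/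
abbrev CProd (N T : Type) := N × Word N T

/-- A grammar, given by its set of productions. -/
structure CFG (N T : Type) where
  prods : Set (CProd N T)

variable {N T : Type}

/-- number of occurrences of nonterminals in a word -/
def ntCount (u : Word N T) : ℕ := (u.filter (fun s => s.isLeft)).length

/-- number of occurrences of terminals in a word -/
def tCount (u : Word N T) : ℕ := (u.filter (fun s => s.isRight)).length

/-- the result of applying production `p` at position `j` of `u` -/
def applyProd (p : CProd N T) (j : ℕ) (u : Word N T) : Word N T :=
  u.take j ++ p.2 ++ u.drop (j + 1)

/-- `KSeq G k u γjs v`: a step sequence from `u` to `v` applying the indicated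
productions at the indicated positions, in which every word (including `u`, `v`)
has at most `k` occurrences of nonterminals (`k = ⊤` places no restriction). -/
inductive KSeq (G : CFG N T) (k : ℕ∞) : Word N T → List (CProd N T × ℕ) → Word N T → Prop
  | refl (u : Word N T) : (ntCount u : ℕ∞) ≤ k → KSeq G k u [] u
  | step {u v : Word N T} {p : CProd N T} {j : ℕ} {rest : List (CProd N T × ℕ)} :
      (ntCount u : ℕ∞) ≤ k → p ∈ G.prods → u[j]? = some (Sum.inl p.1) →
      KSeq G k (applyProd p j u) rest v → KSeq G k u ((p, j) :: rest) v

/-- words annotated with the index of the step at which each symbol occurrence appeared -/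
abbrev AWord (N T : Type) := List ((N ⊕ T) × ℕ)

def strip (u : AWord N T) : Word N T := u.map Prod.fst

def ntCountA (u : AWord N T) : ℕ := (u.filter (fun s => s.1.isLeft)).length

def applyProdA (p : CProd N T) (j m : ℕ) (u : AWord N T) : AWord N T :=
  u.take j ++ p.2.map (fun s => (s, m)) ++ u.drop (j + 1)

/-- the depth-first condition: position `j` carries a maximal first-appearance
index among the nonterminal occurrences of `u` -/
def dfOK (u : AWord N T) (j : ℕ) : Prop :=
  ∀ i x o, u[(i : ℕ)]? = some (Sum.inl x, o) → ∀ s oj, u[j]? = some (s, oj) → o ≤ oj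

/-- `DFSeq G k m u γjs v`: a `k`-index depth-first step sequence on annotated words,
where `m` is the index (in the whole sequence) of the current word `u`. -/
inductive DFSeq (G : CFG N T) (k : ℕ∞) : ℕ → AWord N T → List (CProd N T × ℕ) → AWord N T → Prop
  | refl (m : ℕ) (u : AWord N T) : (ntCountA u : ℕ∞) ≤ k → DFSeq G k m u [] u
  | step {m : ℕ} {u v : AWord N T} {p : CProd N T} {j o : ℕ} {rest : List (CProd N T × ℕ)} :
      (ntCountA u : ℕ∞) ≤ k → p ∈ G.prods → u[j]? = some (Sum.inl p.1, o) →
      dfOK u j →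
      DFSeq G k (m + 1) (applyProdA p j (m + 1) u) rest v →
      DFSeq G k m u ((p, j) :: rest) v

/-- `u ⇒^γ v` by a `k`-index step sequence (positions existentially quantified). -/
def CtrlSeq (G : CFG N T) (k : ℕ∞) (u : Word N T) (γ : List (CProd N T)) (v : Word N T) : Prop :=
  ∃ js : List ℕ, js.length = γ.length ∧ KSeq G k u (γ.zip js) v

/-- annotate a word as an initial word of a step sequence -/
def annot (u : Word N T) : AWord N T := u.map (fun s => (s, 0))

/-- `u ⇒^γ v` by a `k`-index depth-first step sequence starting at `u`. -/
def DFCtrlFrom (G : CFG N T) (k : ℕ∞) (u : Word N T) (γ : List (CProd N T)) (v : Word N T) :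
    Prop :=
  ∃ (js : List ℕ) (va : AWord N T),
    js.length = γ.length ∧ DFSeq G k 0 (annot u) (γ.zip js) va ∧ strip va = v

/-- embedding of terminal words -/
def tw (w : List T) : Word N T := w.map Sum.inr

/-- the sentential word `u Y v` where `u, v` are terminal and `Y` is an optional nonterminal -/
def sent (u : List T) (Y : Option N) (v : List T) : Word N T :=
  tw u ++ (Y.elim [] (fun y => [Sum.inl y])) ++ tw v

/-- `L^{(k)}_{X,Y}(G) = { u·v | X ⇒* u Y v by a k-index step sequence }`;
`Y = none` stands for `ε`. -/
def LKY (G : CFG N T) (k : ℕ∞) (X : N) (Y : Option N) : Set (List T) :=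
  {w | ∃ u v γ, w = u ++ v ∧ CtrlSeq G k [Sum.inl X] γ (sent u Y v)}

/-- `L_X(G)` -/
def Lang (G : CFG N T) (X : N) : Set (List T) := LKY G ⊤ X none

/-- `L^{(k)}_X(G)` -/
def LangK (G : CFG N T) (k : ℕ) (X : N) : Set (List T) := LKY G (k : ℕ∞) X none

/-- `Γ^{df(k)}_{X,Y}(G)`: control words of `k`-index depth-first step sequences `X ⇒^γ u Y v`. -/
def GammaDF (G : CFG N T) (k : ℕ) (X : N) (Y : Option N) : Set (List (CProd N T)) :=
  {γ | ∃ u v : List T, DFCtrlFrom G (k : ℕ∞) [Sum.inl X] γ (sent u Y v)}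

/-- `L̂_{X,Y}(Γ, G)` -/
def LHat (G : CFG N T) (Γ : Set (List (CProd N T))) (X : N) (Y : Option N) : Set (List T) :=
  {w | ∃ u v, w = u ++ v ∧ ∃ γ ∈ Γ, CtrlSeq G ⊤ [Sum.inl X] γ (sent u Y v)}

/-- the language of the bounded expression `w₁* ⋯ w_d*` -/
def BLang {α : Type} : List (List α) → Set (List α)
  | [] => {[]}
  | w :: ws => {u | ∃ (n : ℕ) (v : List α), v ∈ BLang ws ∧ u = (List.replicate n w).flatten ++ v}

/-- the words of a bounded expression must be nonempty -/
def IsBExpr {α : Type} (ws : List (List α)) : Prop := ∀ w ∈ ws, w ≠ []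

/-- the language of the letter-bounded expression `a₁* ⋯ a_d*` -/
def letterLang {α : Type} (as : List α) : Set (List α) := BLang (as.map (fun a => [a]))

/-- the language `a_i* ⋯ a_j*` (0-indexed segment of `as` from `i` to `j` inclusive) -/
def segLang {α : Type} (as : List α) (i j : ℕ) : Set (List α) :=
  letterLang ((as.drop i).take (j - i + 1))

end Paper

namespace Paper

variable {N T : Type}

/-- ranked words over the nonterminals -/
abbrev RW (N : Type) := List (N × ℕ)

/-- the set of rank values is downward closed (equivalently, of the form `{0, …, m}`
when nonempty) -/
def contiguousRanks (q : RW N) : Prop := ∀ p ∈ q, ∀ j ≤ p.2, ∃ x : N, (x, j) ∈ q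

/-- vertices of the graph `A^{df(k)}_G` -/
def IsVertex (k : ℕ) (q : RW N) : Prop :=
  q.length ≤ k ∧ contiguousRanks q ∧ List.Pairwise (· ≤ ·) (q.map Prod.snd)

/-- `w↓Ξ` : projection of a word to its nonterminals -/
def ntProj (w : Word N T) : List N := w.filterMap Sum.getLeft?

open Classical in
/-- the rank given to the nonterminals produced by a step rewriting a nonterminal
of maximal rank `i`, where `uv` is the rest of the ranked word -/
noncomputable def newRank (uv : RW N) (i : ℕ) : ℕ :=
  if uv = [] then 0 else if ∀ p ∈ uv, p.2 ≠ i then i else i + 1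

/-- the edge relation of the graph `A^{df(k)}_G` -/
def Edge (G : CFG N T) (k : ℕ) (q : RW N) (p : CProd N T) (q' : RW N) : Prop :=
  p ∈ G.prods ∧ IsVertex k q ∧ IsVertex k q' ∧
  ∃ (u v : RW N) (i : ℕ), q = u ++ [(p.1, i)] ++ v ∧ (∀ x ∈ q, x.2 ≤ i) ∧
    q' = u ++ v ++ (ntProj p.2).map (fun X => (X, newRank (u ++ v) i))

/-- paths in a labeled graph, recording the sequence of edge labels -/
inductive GPath {V E : Type} (edge : V → E → V → Prop) : V → List E → V → Prop
  | refl (v : V) : GPath edge v [] v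
  | step {v v' v'' : V} {e : E} {es : List E} :
      edge v e v' → GPath edge v' es v'' → GPath edge v (e :: es) v''

/-- paths recording the successive vertices as well -/
inductive VPath {V E : Type} (edge : V → E → V → Prop) : V → List (E × V) → Prop
  | refl (v : V) : VPath edge v []
  | step {v v' : V} {e : E} {rest : List (E × V)} :
      edge v e v' → VPath edge v' rest → VPath edge v ((e, v') :: rest)

/-- endpoint of a path starting at `q` -/
def pend {V E : Type} (q : V) (π : List (E × V)) : V := (π.map Prod.snd).getLastD q

/-- a path is acyclic iff it visits no vertex twice -/
def AcyclicFrom {V E : Type} (q : V) (π : List (E × V)) : Prop :=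
  (q :: π.map Prod.snd).Nodup

/-- `Decomp edge q pairs fin` asserts that the path obtained by concatenating, in order,
the segments of `pairs` (each an acyclic segment followed by a cycle) and `fin` is a valid
path from `q`, alternating acyclic segments `ς_j` and cycles `θ_j`. -/
def Decomp {V E : Type} (edge : V → E → V → Prop) :
    V → List (List (E × V) × List (E × V)) → List (E × V) → Prop
  | q, [], fin => VPath edge q fin ∧ AcyclicFrom q fin
  | q, (σ, θ) :: rest, fin =>
      VPath edge q σ ∧ AcyclicFrom q σ ∧
      VPath edge (pend q σ) θ ∧ pend (pend q σ) θ = pend q σ ∧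
      Decomp edge (pend q σ) rest fin

/-- `|γ|_a`: total number of occurrences of the terminal `a` in the right-hand
sides of the productions of the control word `γ` -/
def projCnt {A : Type} [DecidableEq A] (γ : List (CProd N A)) (a : A) : ℕ :=
  ((γ.map (fun p => p.2)).flatten.filterMap Sum.getRight?).count a

/-- `proj(γ) = a₁^{|γ|_{a₁}} ⋯ a_s^{|γ|_{a_s}}` -/
def projW {A : Type} [DecidableEq A] (as : List A) (γ : List (CProd N A)) : List A :=
  (as.map (fun a => List.replicate (projCnt γ a) a)).flatten

end Paper

namespace Paper

variable {N T : Type}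

/-- a grammar is in 2-normal form -/
def TwoNF (G : CFG N T) : Prop := ∀ p ∈ G.prods, p.2.length ≤ 2

/-- states of the automaton/grammar `G^b`: `(s, i)` encodes `q^{(s+1)}_{i+1}`,
i.e. position `i` (0-indexed) inside the block `s` (0-indexed) -/
abbrev QB : Type := ℕ × ℕ

/-- `ℓ_s`: length of the `s`-th word of the bounded expression -/
def lenB (ws : List (List T)) (s : ℕ) : ℕ := (ws.getD s []).length

/-- the `i`-th letter of the `s`-th word -/
def letterB (ws : List (List T)) (s i : ℕ) : Option T := (ws.getD s [])[i]?

/-- the productions of the grammar `G^b` generating the bounded expression `b` -/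
def DeltaB (ws : List (List T)) : Set (CProd QB T) :=
  {p | (∃ s i a, s < ws.length ∧ i + 1 < lenB ws s ∧ letterB ws s i = some a ∧
          p = ((s, i), [Sum.inr a, Sum.inl (s, i + 1)]))
     ∨ (∃ s s' a, s ≤ s' ∧ s' < ws.length ∧
          letterB ws s (lenB ws s - 1) = some a ∧
          p = ((s, lenB ws s - 1), [Sum.inr a, Sum.inl (s', 0)]))
     ∨ (∃ s, s < ws.length ∧ p = ((s, 0), ([] : Word QB T)))}

/-- the grammar `G^b` -/
def GB (ws : List (List T)) : CFG QB T := ⟨DeltaB ws⟩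

/-- nonterminals `[q X q']` of the product grammar `G^∩` -/
abbrev NI (N : Type) : Type := QB × N × QB

/-- `q ∈ Ξ^b` -/
def ValidQ (ws : List (List T)) (q : QB) : Prop :=
  q.1 < ws.length ∧ q.2 < lenB ws q.1

/-- `[q X q'] ∈ Ξ^∩`: both states valid and blocks in order -/
def ValidNI (ws : List (List T)) (n : NI N) : Prop :=
  ValidQ ws n.1 ∧ ValidQ ws n.2.2 ∧ n.1.1 ≤ n.2.2.1

/-- `q ⇒* w·q'` in `G^b` -/
def DerB (ws : List (List T)) (q : QB) (w : List T) (q' : QB) : Prop :=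
  ∃ γ, CtrlSeq (GB ws) ⊤ [Sum.inl q] γ (tw w ++ [Sum.inl q'])

/-- the productions `Δ^∩` of the product grammar `G^∩` -/
def DeltaI (G : CFG N T) (ws : List (List T)) : Set (CProd (NI N) T) :=
  {pp | ∃ (q q' : QB) (X : N), ValidNI ws (q, X, q') ∧
     ((∃ w : List T, (X, tw w) ∈ G.prods ∧ DerB ws q w q' ∧
         pp = ((q, X, q'), tw w)) ∨
      (∃ Y : N, (X, [Sum.inl Y]) ∈ G.prods ∧
         pp = ((q, X, q'), [Sum.inl ((q, Y, q') : NI N)])) ∨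
      (∃ (a : T) (Y : N) (qm : QB), (X, [Sum.inr a, Sum.inl Y]) ∈ G.prods ∧
         ((q, [Sum.inr a, Sum.inl qm]) : CProd QB T) ∈ DeltaB ws ∧ ValidNI ws (qm, Y, q') ∧
         pp = ((q, X, q'), [Sum.inr a, Sum.inl ((qm, Y, q') : NI N)])) ∨
      (∃ (a : T) (Y : N) (qm : QB), (X, [Sum.inl Y, Sum.inr a]) ∈ G.prods ∧
         ((qm, [Sum.inr a, Sum.inl q']) : CProd QB T) ∈ DeltaB ws ∧ ValidNI ws (q, Y, qm) ∧
         pp = ((q, X, q'), [Sum.inl ((q, Y, qm) : NI N), Sum.inr a])) ∨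
      (∃ (Y Z : N) (qm : QB), (X, [Sum.inl Y, Sum.inl Z]) ∈ G.prods ∧
         ValidNI ws (q, Y, qm) ∧ ValidNI ws (qm, Z, q') ∧
         pp = ((q, X, q'), [Sum.inl ((q, Y, qm) : NI N), Sum.inl ((qm, Z, q') : NI N)])))}

/-- the product grammar `G^∩` -/
def GI (G : CFG N T) (ws : List (List T)) : CFG (NI N) T := ⟨DeltaI G ws⟩

/-- `ζ` on symbols -/
def zetaS : (NI N ⊕ T) → (N ⊕ T) := Sum.map (fun n => n.2.1) id

/-- `ζ` on productions -/
def zetaP (p : CProd (NI N) T) : CProd N T := (p.1.2.1, p.2.map zetaS)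

/-- `ζ` on control words -/
def zetaC (γ : List (CProd (NI N) T)) : List (CProd N T) := γ.map zetaP

/-- the intermediate state of the (unique, shortest) two-step run of `G^b` from the
left state of `h` to its right state; when the first step wraps, the least possible
intermediate block is chosen -/
noncomputable def iotaMid (ws : List (List T)) (h : NI N) (a b : T) : QB :=
  if h.1.2 + 1 < lenB ws h.1.1 then (h.1.1, h.1.2 + 1)
  else (sInf {y : ℕ | (((h.1.1, h.1.2), [Sum.inr a, Sum.inl ((y, 0) : QB)]) : CProd QB T) ∈ DeltaB ws ∧
                (((y, 0), [Sum.inr b, Sum.inl (h.2.2 : QB)]) : CProd QB T) ∈ DeltaB ws}, 0)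

/-- `ι` on right-hand sides: relabels terminals by the indices (0-indexed) of the
blocks of `b` completed by the corresponding moves of `G^b`; `h` is the head of the
production -/
noncomputable def iotaRhs (ws : List (List T)) (h : NI N) :
    Word (NI N) T → Word (NI N) ℕ
  | [] => []
  | [Sum.inr _] => if h.2.2.2 = 0 then [Sum.inr h.1.1] else []
  | [Sum.inr a, Sum.inr b] =>
      (if (iotaMid ws h a b).2 = 0 then [Sum.inr h.1.1] else []) ++
      (if h.2.2.2 = 0 then [Sum.inr (iotaMid ws h a b).1] else [])
  | [Sum.inr _, Sum.inl m] => (if m.1.2 = 0 then [Sum.inr h.1.1] else []) ++ [Sum.inl m]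
  | [Sum.inl m, Sum.inr _] => [Sum.inl m] ++ (if h.2.2.2 = 0 then [Sum.inr m.2.2.1] else [])
  | other => other.map (Sum.map id (fun _ => 0))

/-- the map `ι : Δ^∩ → Δ^⋈` -/
noncomputable def iota (ws : List (List T)) (p : CProd (NI N) T) : CProd (NI N) ℕ :=
  (p.1, iotaRhs ws p.1 p.2)

/-- the grammar `G^⋈`, whose terminals are the (0-indexed) letters `a₁, …, a_d`
represented by natural numbers -/
noncomputable def GBow (G : CFG N T) (ws : List (List T)) : CFG (NI N) ℕ :=
  ⟨iota ws '' DeltaI G ws⟩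

end Paper

namespace Paper

variable {N A : Type}

/-- `Ξ̂`: nonterminals producing some word starting with `a₁` and some word ending
with `a_d` -/
def XiHat (G : CFG N A) (a1 ad : A) : Set N :=
  {Y | (∃ w ∈ Lang G Y, ∃ v, w = a1 :: v) ∧ (∃ w ∈ Lang G Y, ∃ v, w = v ++ [ad])}

/-- the grammar `G^♯` (here `S = Ξ̂`, and `Ξ̌` is its complement) -/
def GSharp (G : CFG N A) (S : Set N) : CFG N A :=
  ⟨{p | p ∈ G.prods ∧ p.1 ∉ S} ∪
   {p | p ∈ G.prods ∧ p.1 ∈ S ∧ ∃ (u : Word N A) (Xr : N) (v : Word N A),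
      Xr ∈ S ∧ p.2 = u ++ [Sum.inl Xr] ++ v}⟩

/-- the grammar `G_{i,w}` for a pivot production `piv` (here `S = Ξ̂`) -/
def GPivot (G : CFG N A) (S : Set N) (piv : CProd N A) : CFG N A :=
  ⟨{p | p ∈ G.prods ∧ p.1 ∉ S} ∪ {piv}⟩

/-- `G` is reduced for `X` -/
def Reduced (G : CFG N A) (X : N) : Prop :=
  ∀ Y : N, Y ≠ X → (LKY G ⊤ X (some Y)).Nonempty ∧ (Lang G Y).Nonempty

/-- `a₁* ⋯ a_d*` (given by the list `as`) is the minimal strict letter-bounded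
expression for `L_X(G)` -/
def MinimalLB (G : CFG N A) (X : N) (as : List A) : Prop :=
  Lang G X ⊆ letterLang as ∧ ∀ i < as.length, ¬ (Lang G X ⊆ letterLang (as.eraseIdx i))

/-- a symbol of `A ∪ {ε}` as a word -/
def optT (a : Option A) : Word N A := a.elim [] (fun x => [Sum.inr x])

/-- a symbol of `Ξ ∪ {ε}` as a word -/
def optN (y : Option N) : Word N A := y.elim [] (fun x => [Sum.inl x])

/-- `y ⇒^γ u_y` is a (possibly empty) `k`-index depth-first derivation, where
`y ∈ Ξ ∪ {ε}`; for `y = ε` the derivation is empty -/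
def optDFDer (H : CFG N A) (k : ℕ) (y : Option N) (γ : List (CProd N A)) : Prop :=
  match y with
  | some Y => ∃ w : List A, DFCtrlFrom H (k : ℕ∞) [Sum.inl Y] γ (tw w)
  | none => γ = []

/-- the grammar `G_k` with productions `X_i → X_{i-1} X_{i-1}` (1 ≤ i ≤ k) and `X_0 → a` -/
def Gk (k : ℕ) : CFG ℕ Unit :=
  ⟨{p | (∃ i, 1 ≤ i ∧ i ≤ k ∧ p = (i, [Sum.inl (i - 1), Sum.inl (i - 1)])) ∨
        p = (0, [Sum.inr ()])}⟩

end Paper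
/-!
In `G_k` each `X_i` has a single production `p_i`, and a depth-first step rewrites an occurrence
of maximal first-appearance index. All occurrences of equal index carry the same nonterminal, so
the multiset of (nonterminal, index) occurrences determines each step: every complete depth-first
derivation of `X_k` has the control word `w_k = p_k w_{k-1} w_{k-1}`, of length `2^(k+1) - 1`,
and the cover hypothesis forces `w_k ∈ γ₁* ⋯ γ_n*`. But `w_k` is cube-free (`p_k` occurs once,
`p_{k-1}` twice, and a factor of `w_{k-1} w_{k-1}` avoiding its head `p_{k-1}` lies in one copy),
and a cube-free word of `γ₁* ⋯ γ_n*` repeats each `γ_i` at most twice. Hence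
`2^(k+1) - 1 ≤ 2 Σ |γ_i|`.
-/

namespace Paper

section Words

variable {α : Type}

def CubeFree (u : List α) : Prop := ∀ e : List α, e ≠ [] → ¬ e ++ e ++ e <:+: u

lemma CubeFree.of_infix {u v : List α} (hv : CubeFree v) (h : u <:+: v) : CubeFree u :=
  fun e he hu => hv e he (hu.trans h)

lemma length_le_of_mem_BLang_of_cubeFree :
    ∀ {ws : List (List α)} {u : List α}, u ∈ BLang ws → CubeFree u →
      u.length ≤ 2 * (ws.map List.length).sum
  | [], u, hu, _ => by rw [show u = [] from hu]; simp
  | w :: ws, _, ⟨n, v, hv, rfl⟩, hcube => by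
    have ih := length_le_of_mem_BLang_of_cubeFree hv
      (hcube.of_infix (List.suffix_append _ _).isInfix)
    have hn : w = [] ∨ n ≤ 2 := by
      by_contra! h
      obtain ⟨t, rfl⟩ := Nat.exists_eq_add_of_le h.2
      refine hcube w h.1 ⟨[], (List.replicate t w).flatten ++ v, ?_⟩
      simp [List.replicate_add, List.replicate_succ]
    simp only [List.length_append, List.length_flatten, List.map_replicate, List.sum_replicate,
      smul_eq_mul, List.map_cons, List.sum_cons]
    rcases hn with rfl | hn
    · simpa using ih
    · nlinarith

lemma infix_of_infix_append_self {m W : List α} {c : α} (hc : W.head? = some c) (hm : c ∉ m)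
    (h : m <:+: W ++ W) : m <:+: W := by
  obtain ⟨x, y, hxy⟩ := h
  rw [List.append_assoc, List.append_eq_append_iff] at hxy
  rcases hxy with ⟨a, hW, hay⟩ | ⟨b, -, hW⟩
  · rcases List.append_eq_append_iff.1 hay with ⟨a', rfl, -⟩ | ⟨c', rfl, hW'⟩
    · exact ⟨x, a', by simp [hW]⟩
    · cases c' with
      | nil => exact ⟨x, [], by simp [hW]⟩
      | cons d c' =>
        rw [hW'] at hc
        cases hc
        exact absurd (by simp) hm
  · exact ⟨b, y, by simp [hW]⟩

end Words

section ControlWord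

def gkProd (i : ℕ) : CProd ℕ Unit :=
  if i = 0 then (0, [Sum.inr ()]) else (i, [Sum.inl (i - 1), Sum.inl (i - 1)])

@[simp] lemma gkProd_fst (i : ℕ) : (gkProd i).1 = i := by
  unfold gkProd; split <;> simp_all

lemma gkProd_injective : Function.Injective gkProd := fun i j h => by
  simpa using congrArg Prod.fst h

lemma gkProd_mem_Gk {k i : ℕ} (h : i ≤ k) : gkProd i ∈ (Gk k).prods := by
  cases i with
  | zero => exact Or.inr (by simp [gkProd])
  | succ n => exact Or.inl ⟨n + 1, by omega, h, by simp [gkProd]⟩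

lemma eq_gkProd_of_mem_Gk {k : ℕ} {p : CProd ℕ Unit} (h : p ∈ (Gk k).prods) : p = gkProd p.1 := by
  rcases h with ⟨i, hi, -, rfl⟩ | rfl
  · simp [gkProd, show i ≠ 0 by omega]
  · simp [gkProd]

/-- The control word of the depth-first derivation of `X_i` in `G_k`: the preorder traversal of
the complete binary derivation tree. -/
def ctrlWord : ℕ → List (CProd ℕ Unit)
  | 0 => [gkProd 0]
  | i + 1 => gkProd (i + 1) :: (ctrlWord i ++ ctrlWord i)

lemma length_ctrlWord (i : ℕ) : (ctrlWord i).length = 2 ^ (i + 1) - 1 := by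
  induction i with
  | zero => simp [ctrlWord]
  | succ n ih =>
    have : 1 ≤ 2 ^ (n + 1) := Nat.one_le_two_pow
    simp only [ctrlWord, List.length_cons, List.length_append, ih, pow_succ]
    omega

lemma head?_ctrlWord (i : ℕ) : (ctrlWord i).head? = some (gkProd i) := by
  cases i <;> rfl

lemma countP_gkProd_ctrlWord (j i : ℕ) :
    (ctrlWord i).countP (· = gkProd j) = if j ≤ i then 2 ^ (i - j) else 0 := by
  induction i with
  | zero => by_cases h : j = 0 <;> simp [ctrlWord, gkProd_injective.eq_iff, h, eq_comm]
  | succ n ih =>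
    simp only [ctrlWord, List.countP_cons, List.countP_append, ih, decide_eq_true_eq,
      gkProd_injective.eq_iff]
    rcases lt_trichotomy j (n + 1) with h | rfl | h
    · rw [if_pos (by omega), if_pos h.le, if_neg h.ne', show n + 1 - j = n - j + 1 by omega,
        pow_succ]
      omega
    · simp
    · rw [if_neg (by omega), if_neg (by omega), if_neg (by omega)]

lemma cubeFree_ctrlWord (i : ℕ) : CubeFree (ctrlWord i) := by
  induction i with
  | zero =>
    intro e he h
    have := h.length_le
    have := List.length_pos_iff.2 he
    simp [ctrlWord] at *
    omega
  | succ n ih =>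
    intro e he h
    have hcount : ∀ a ∈ e, 3 ≤ (ctrlWord (n + 1)).countP (· = a) := fun a ha =>
      calc 3 ≤ (e ++ e ++ e).countP (· = a) := by
            have : 0 < e.countP (· = a) := List.countP_pos_iff.2 ⟨a, ha, by simp⟩
            simp only [List.countP_append]
            omega
        _ ≤ _ := h.sublist.countP_le
    have hnotMem_succ : gkProd (n + 1) ∉ e := fun ha => by
      simpa [countP_gkProd_ctrlWord] using hcount _ ha
    have hnotMem : gkProd n ∉ e := fun ha => by
      simpa [countP_gkProd_ctrlWord] using hcount _ ha
    obtain ⟨s, t, hst⟩ := h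
    cases s with
    | nil =>
      obtain ⟨a, e', rfl⟩ := List.exists_cons_of_ne_nil he
      simp only [ctrlWord, List.nil_append, List.cons_append, List.cons.injEq] at hst
      exact hnotMem_succ (hst.1 ▸ List.mem_cons_self)
    | cons _ s =>
      simp only [ctrlWord, List.cons_append, List.cons.injEq] at hst
      refine ih e he (infix_of_infix_append_self (head?_ctrlWord n) ?_ ⟨s, t, hst.2⟩)
      simpa using hnotMem

end ControlWord

section Annotated

variable {N T : Type}

def ntOcc : (N ⊕ T) × ℕ → Option (N × ℕ)
  | (Sum.inl x, o) => some (x, o)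
  | (Sum.inr _, _) => none

def ntOccs (u : AWord N T) : List (N × ℕ) := u.filterMap ntOcc

@[simp] lemma ntOccs_nil : ntOccs ([] : AWord N T) = [] := rfl

@[simp] lemma ntOccs_cons_inl (x : N) (o : ℕ) (u : AWord N T) :
    ntOccs ((Sum.inl x, o) :: u) = (x, o) :: ntOccs u := rfl

@[simp] lemma ntOccs_cons_inr (t : T) (o : ℕ) (u : AWord N T) :
    ntOccs ((Sum.inr t, o) :: u) = ntOccs u := rfl

@[simp] lemma ntOccs_append (u v : AWord N T) : ntOccs (u ++ v) = ntOccs u ++ ntOccs v :=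
  List.filterMap_append

lemma mem_ntOccs {u : AWord N T} {x : N} {o : ℕ} : (x, o) ∈ ntOccs u ↔ (Sum.inl x, o) ∈ u := by
  induction u with
  | nil => simp
  | cons s u ih =>
    obtain ⟨y | t, o'⟩ := s
    · simp [ih]
    · simp [ih]

lemma ntCountA_eq_ntCount_strip (u : AWord N T) : ntCountA u = ntCount (strip u) := by
  rw [ntCountA, ntCount, strip, List.filter_map, List.length_map]
  rfl

lemma strip_applyProdA (p : CProd N T) (j m : ℕ) (u : AWord N T) :
    strip (applyProdA p j m u) = applyProd p j (strip u) := by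
  simp [strip, applyProdA, applyProd, List.map_take, List.map_drop, Function.comp_def]

@[simp] lemma strip_annot (u : Word N T) : strip (annot u) = u := by
  simp [strip, annot, Function.comp_def]

lemma ntOccs_eq_nil_iff_exists_strip_eq_tw {u : AWord N T} :
    ntOccs u = [] ↔ ∃ w, strip u = tw w := by
  induction u with
  | nil => exact ⟨fun _ => ⟨[], rfl⟩, fun _ => rfl⟩
  | cons s u ih =>
    obtain ⟨x | t, o⟩ := s
    · simp only [ntOccs_cons_inl, reduceCtorEq, false_iff, not_exists]
      rintro (_ | _) h <;> simp [strip, tw] at h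
    · simp only [ntOccs_cons_inr, ih, strip, tw, List.map_cons]
      constructor
      · rintro ⟨w, hw⟩
        exact ⟨t :: w, by simp [hw]⟩
      · rintro ⟨_ | ⟨t', w⟩, hw⟩
        · simp at hw
        · exact ⟨w, (List.cons.inj hw).2⟩

lemma sent_none (u v : List T) : (sent u none v : Word N T) = tw (u ++ v) := by
  simp [sent, tw]

lemma coe_ntOccs_applyProdA [DecidableEq N] {p : CProd N T} {j m o : ℕ} {x : N} {u : AWord N T}
    (hj : u[j]? = some (Sum.inl x, o)) :
    (ntOccs (applyProdA p j m u) : Multiset (N × ℕ)) =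
      (ntOccs u : Multiset (N × ℕ)).erase (x, o) + ntOccs (p.2.map (·, m)) := by
  obtain ⟨hlt, hget⟩ := List.getElem?_eq_some_iff.1 hj
  have hu : u = u.take j ++ (Sum.inl x, o) :: u.drop (j + 1) := by
    rw [← hget, ← List.drop_eq_getElem_cons hlt, List.take_append_drop]
  rw [applyProdA]
  conv_rhs => rw [hu]
  simp only [ntOccs_append, ntOccs_cons_inl, ← Multiset.coe_add, ← Multiset.cons_coe,
    Multiset.add_cons, Multiset.erase_cons_head]
  abel

/-- In `G_k` depth-first steps preserve this invariant, since the two nonterminals created by a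
step are equal; it makes the head of a depth-first step a function of the occurrence multiset. -/
def Coherent (m : ℕ) (u : AWord N T) : Prop :=
  (∀ q ∈ ntOccs u, q.2 ≤ m) ∧ ∀ q ∈ ntOccs u, ∀ q' ∈ ntOccs u, q.2 = q'.2 → q.1 = q'.1

end Annotated

section DepthFirst

variable {N T : Type}

lemma dfOK_of_le {u : AWord N T} {j o : ℕ} {s : N ⊕ T} (hj : u[j]? = some (s, o))
    (h : ∀ q ∈ ntOccs u, q.2 ≤ o) : dfOK u j := by
  intro i x o' hi s' oj hj'
  rw [hj] at hj'
  cases hj'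
  exact h (x, o') (mem_ntOccs.2 (List.mem_of_getElem? hi))

lemma le_of_dfOK {u : AWord N T} {j o : ℕ} {s : N ⊕ T} (h : dfOK u j) (hj : u[j]? = some (s, o)) :
    ∀ q ∈ ntOccs u, q.2 ≤ o := by
  rintro ⟨x, o'⟩ hq
  obtain ⟨i, hi⟩ := List.getElem?_of_mem (mem_ntOccs.1 hq)
  exact h i x o' hi s o hj

namespace DFSeq

variable {G : CFG N T} {κ : ℕ∞}

lemma append {m : ℕ} {u v z : AWord N T} {l l' : List (CProd N T × ℕ)}
    (h : DFSeq G κ m u l v) (h' : DFSeq G κ (m + l.length) v l' z) :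
    DFSeq G κ m u (l ++ l') z := by
  induction h with
  | refl => simpa using h'
  | step hc hp hj hdf _ ih =>
    refine DFSeq.step hc hp hj hdf (ih ?_)
    simpa [Nat.add_right_comm, Nat.add_assoc] using h'

lemma kSeq {m : ℕ} {u v : AWord N T} {l : List (CProd N T × ℕ)} (h : DFSeq G κ m u l v) :
    KSeq G κ (strip u) l (strip v) := by
  induction h with
  | refl _ _ hc => exact KSeq.refl _ (by rwa [← ntCountA_eq_ntCount_strip])
  | step hc hp hj _ _ ih =>
    refine KSeq.step (by rwa [← ntCountA_eq_ntCount_strip]) hp ?_ (by rwa [← strip_applyProdA])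
    simp [strip, hj]

lemma ctrlSeq {m : ℕ} {u v : AWord N T} {l : List (CProd N T × ℕ)} (h : DFSeq G κ m u l v) :
    CtrlSeq G κ (strip u) (l.map Prod.fst) (strip v) :=
  ⟨l.map Prod.snd, by simp, by
    rw [← List.unzip_fst, ← List.unzip_snd, List.zip_unzip]
    exact h.kSeq⟩

lemma step_leftmost {m mo : ℕ} {A R v : AWord N T} {p : CProd N T} {l : List (CProd N T × ℕ)}
    (hp : p ∈ G.prods) (hA : ntOccs A = []) (hR : ∀ q ∈ ntOccs R, q.2 ≤ mo)
    (h : DFSeq G ⊤ (m + 1) (A ++ p.2.map (·, m + 1) ++ R) l v) :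
    DFSeq G ⊤ m (A ++ (Sum.inl p.1, mo) :: R) ((p, A.length) :: l) v := by
  have hj : (A ++ (Sum.inl p.1, mo) :: R)[A.length]? = some (Sum.inl p.1, mo) := by simp
  refine DFSeq.step le_top hp hj (dfOK_of_le hj ?_) ?_
  · simp only [ntOccs_append, hA, ntOccs_cons_inl, List.nil_append, List.mem_cons]
    rintro q (rfl | hq)
    exacts [le_rfl, hR q hq]
  · simpa [applyProdA] using h

end DFSeq

end DepthFirst

section GkDerivations

variable {k : ℕ}

lemma exists_dfSeq_ctrlWord {i : ℕ} (hi : i ≤ k) {m mo : ℕ} {A R : AWord ℕ Unit} (hmo : mo ≤ m)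
    (hA : ntOccs A = []) (hR : ∀ q ∈ ntOccs R, q.2 ≤ mo) :
    ∃ l B, l.map Prod.fst = ctrlWord i ∧ ntOccs B = [] ∧
      DFSeq (Gk k) ⊤ m (A ++ (Sum.inl i, mo) :: R) l (A ++ B ++ R) := by
  induction i generalizing m mo A R with
  | zero =>
    refine ⟨[(gkProd 0, A.length)], [(Sum.inr (), m + 1)], rfl, rfl, ?_⟩
    refine DFSeq.step_leftmost (p := gkProd 0) (gkProd_mem_Gk hi) hA hR ?_
    exact DFSeq.refl _ _ le_top
  | succ n ih =>
    have hR' : ∀ q ∈ ntOccs ((Sum.inl n, m + 1) :: R), q.2 ≤ m + 1 := by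
      simp only [ntOccs_cons_inl, List.mem_cons]
      rintro q (rfl | hq)
      exacts [le_rfl, (hR q hq).trans (by omega)]
    obtain ⟨l₁, B₁, hl₁, hB₁, h₁⟩ := ih (by omega) le_rfl hA hR'
    obtain ⟨l₂, B₂, hl₂, hB₂, h₂⟩ := ih (by omega) (m := m + 1 + l₁.length) (mo := m + 1)
      (A := A ++ B₁) (by omega) (by simp [hA, hB₁]) (fun q hq => (hR q hq).trans (by omega))
    refine ⟨(gkProd (n + 1), A.length) :: (l₁ ++ l₂), B₁ ++ B₂, ?_, by simp [hB₁, hB₂], ?_⟩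
    · simp [ctrlWord, hl₁, hl₂]
    · refine DFSeq.step_leftmost (p := gkProd (n + 1)) (gkProd_mem_Gk hi) hA hR ?_
      simpa [gkProd] using h₁.append (by simpa using h₂)

lemma exists_dfSeq_annot_ctrlWord {i : ℕ} (hi : i ≤ k) :
    ∃ l B, l.map Prod.fst = ctrlWord i ∧ ntOccs B = [] ∧
      DFSeq (Gk k) ⊤ 0 (annot [Sum.inl i]) l B := by
  simpa [annot] using exists_dfSeq_ctrlWord hi (m := 0) (A := []) (R := []) le_rfl rfl (by simp)

lemma mem_ntOccs_gkProd {i m : ℕ} {q : ℕ × ℕ} (hq : q ∈ ntOccs ((gkProd i).2.map (·, m))) :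
    q = (i - 1, m) := by
  unfold gkProd at hq
  split at hq <;> simp_all

lemma Coherent.applyProdA_Gk {m j o x : ℕ} {u : AWord ℕ Unit} {p : CProd ℕ Unit}
    (hp : p ∈ (Gk k).prods) (hj : u[j]? = some (Sum.inl x, o)) (hu : Coherent m u) :
    Coherent (m + 1) (applyProdA p j (m + 1) u) := by
  have hmem : ∀ q ∈ ntOccs (applyProdA p j (m + 1) u), q ∈ ntOccs u ∨ q = (p.1 - 1, m + 1) := by
    intro q hq
    rw [← Multiset.mem_coe, coe_ntOccs_applyProdA hj, Multiset.mem_add, Multiset.mem_coe] at hq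
    rcases hq with hq | hq
    · exact Or.inl (Multiset.mem_coe.1 (Multiset.mem_of_mem_erase hq))
    · rw [eq_gkProd_of_mem_Gk hp] at hq
      exact Or.inr (by simpa using mem_ntOccs_gkProd hq)
  constructor
  · intro q hq
    rcases hmem q hq with h | rfl
    exacts [(hu.1 q h).trans m.le_succ, le_rfl]
  · intro q hq q' hq' he
    rcases hmem q hq with h | rfl <;> rcases hmem q' hq' with h' | rfl
    · exact hu.2 q h q' h' he
    · exact absurd he (by have := hu.1 q h; omega)
    · exact absurd he (by have := hu.1 q' h'; omega)
    · rfl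

lemma dfStep_eq_of_coe_ntOccs_eq {m : ℕ} {u₁ u₂ : AWord ℕ Unit} {p₁ p₂ : CProd ℕ Unit}
    {j₁ j₂ o₁ o₂ : ℕ} (hp₁ : p₁ ∈ (Gk k).prods) (hp₂ : p₂ ∈ (Gk k).prods)
    (hj₁ : u₁[j₁]? = some (Sum.inl p₁.1, o₁)) (hj₂ : u₂[j₂]? = some (Sum.inl p₂.1, o₂))
    (hdf₁ : dfOK u₁ j₁) (hdf₂ : dfOK u₂ j₂) (hc : Coherent m u₂)
    (hu : (ntOccs u₁ : Multiset (ℕ × ℕ)) = ntOccs u₂) : p₁ = p₂ ∧ o₁ = o₂ := by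
  have hmem₁ : (p₁.1, o₁) ∈ ntOccs u₂ := by
    rw [← Multiset.mem_coe, ← hu, Multiset.mem_coe]
    exact mem_ntOccs.2 (List.mem_of_getElem? hj₁)
  have hmem₂ : (p₂.1, o₂) ∈ ntOccs u₂ := mem_ntOccs.2 (List.mem_of_getElem? hj₂)
  have hmem₂' : (p₂.1, o₂) ∈ ntOccs u₁ := by
    rwa [← Multiset.mem_coe, hu, Multiset.mem_coe]
  have ho : o₁ = o₂ := le_antisymm (le_of_dfOK hdf₂ hj₂ _ hmem₁) (le_of_dfOK hdf₁ hj₁ _ hmem₂')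
  have hx : p₁.1 = p₂.1 := hc.2 _ hmem₁ _ hmem₂ ho
  exact ⟨by rw [eq_gkProd_of_mem_Gk hp₁, eq_gkProd_of_mem_Gk hp₂, hx], ho⟩

lemma map_fst_eq_of_dfSeq_Gk {κ₁ κ₂ : ℕ∞} {m : ℕ} {u₁ u₂ v₁ v₂ : AWord ℕ Unit}
    {l₁ l₂ : List (CProd ℕ Unit × ℕ)}
    (h₁ : DFSeq (Gk k) κ₁ m u₁ l₁ v₁) (h₂ : DFSeq (Gk k) κ₂ m u₂ l₂ v₂)
    (hv₁ : ntOccs v₁ = []) (hv₂ : ntOccs v₂ = []) (hc₁ : Coherent m u₁) (hc₂ : Coherent m u₂)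
    (hu : (ntOccs u₁ : Multiset (ℕ × ℕ)) = ntOccs u₂) :
    l₁.map Prod.fst = l₂.map Prod.fst := by
  induction h₁ generalizing l₂ u₂ with
  | refl =>
    cases h₂ with
    | refl => rfl
    | step _ _ hj₂ =>
      have := mem_ntOccs.2 (List.mem_of_getElem? hj₂)
      rw [← Multiset.mem_coe, ← hu, hv₁] at this
      simp at this
  | step _ hp₁ hj₁ hdf₁ _ ih =>
    cases h₂ with
    | refl =>
      have := mem_ntOccs.2 (List.mem_of_getElem? hj₁)
      rw [← Multiset.mem_coe, hu, hv₂] at this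
      simp at this
    | step _ hp₂ hj₂ hdf₂ h₂ =>
      obtain ⟨rfl, rfl⟩ := dfStep_eq_of_coe_ntOccs_eq hp₁ hp₂ hj₁ hj₂ hdf₁ hdf₂ hc₂ hu
      rw [List.map_cons, List.map_cons, ih h₂ hv₁ (hc₁.applyProdA_Gk hp₁ hj₁)
        (hc₂.applyProdA_Gk hp₂ hj₂)
        (by rw [coe_ntOccs_applyProdA hj₁, coe_ntOccs_applyProdA hj₂, hu])]

lemma eq_ctrlWord_of_dfCtrlFrom {κ : ℕ∞} {i : ℕ} (hi : i ≤ k) {γ : List (CProd ℕ Unit)}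
    {w : List Unit} (h : DFCtrlFrom (Gk k) κ [Sum.inl i] γ (tw w)) : γ = ctrlWord i := by
  obtain ⟨js, va, hlen, hdf, hva⟩ := h
  obtain ⟨l, B, hl, hB, hcan⟩ := exists_dfSeq_annot_ctrlWord hi
  have hc : Coherent 0 (annot [Sum.inl i] : AWord ℕ Unit) := ⟨by simp [annot], by simp [annot]⟩
  rw [← List.map_fst_zip hlen.ge, ← hl]
  exact map_fst_eq_of_dfSeq_Gk hdf hcan (ntOccs_eq_nil_iff_exists_strip_eq_tw.2 ⟨w, hva⟩) hB
    hc hc rfl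

lemma Lang_Gk_nonempty (k : ℕ) : (Lang (Gk k) k).Nonempty := by
  obtain ⟨l, B, -, hB, hcan⟩ := exists_dfSeq_annot_ctrlWord (le_refl k)
  obtain ⟨w, hw⟩ := ntOccs_eq_nil_iff_exists_strip_eq_tw.1 hB
  refine ⟨w, w, [], l.map Prod.fst, by simp, ?_⟩
  rw [sent_none, List.append_nil, ← hw]
  simpa using hcan.ctrlSeq

end GkDerivations

theorem optimality_lower_bound_general (k : ℕ)
    (E : List (List (CProd ℕ Unit)))
    (hcover : Lang (Gk k) k = LHat (Gk k) (BLang E ∩ GammaDF (Gk k) (k + 1) k none) k none) :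
    2 ^ (k - 1) ≤ (E.map List.length).sum := by
  obtain ⟨w, hw⟩ := Lang_Gk_nonempty k
  rw [hcover] at hw
  obtain ⟨-, -, -, γ, ⟨hγE, u, v, hγ⟩, -⟩ := hw
  rw [sent_none] at hγ
  obtain rfl := eq_ctrlWord_of_dfCtrlFrom le_rfl hγ
  have hlen := length_le_of_mem_BLang_of_cubeFree hγE (cubeFree_ctrlWord k)
  rw [length_ctrlWord] at hlen
  have : 2 ^ (k - 1) ≤ 2 ^ k := Nat.pow_le_pow_right two_pos (k.sub_le 1)
  have : 2 ^ (k + 1) = 2 * 2 ^ k := by ring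
  omega

/-- Lemma 4, optimality: for `k > 0` and the grammar `G_k`, every
bounded expression `Γ = γ₁* ⋯ γ_n*` over `Δ_k` with
`L_{X_k}(G_k) = L̂_{X_k}(Γ ∩ Γ^{df(k+1)}_{X_k}(G_k), G_k)` has size
`Σᵢ |γᵢ| ≥ 2^{k-1}`. -/
theorem optimality_lower_bound (k : ℕ) (hk : 0 < k)
    (E : List (List (CProd ℕ Unit))) (hE : IsBExpr E)
    (hcover : Lang (Gk k) k = LHat (Gk k) (BLang E ∩ GammaDF (Gk k) (k + 1) k none) k none) :
    2 ^ (k - 1) ≤ (E.map List.length).sum :=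
  optimality_lower_bound_general k E hcover

end Paper
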